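/- arXiv:1905.04208 — 7 statements merged into one kernel-verified Lean document; each statement's English description precedes it below -/
import Mathlib

section
/- Let n, m, p, k be positive integers, D ∈ ℂ^{ن×n} invertible, B ∈ ℂ^{n×m}, C ∈ ℂ^{p×n}, and V, W ∈ ℂ^{n×k} with Wᴴ D V invertible. If there exists X ∈ ℂ^{k×m} with D⁻¹ B = V X (i.e. every column of D⁻¹B lies in the column space of V), then (C V) (Wᴴ D V)⁻¹ (Wᴴ B) = C D⁻¹ B. -/
open Matrix

/-- **One-sided tangential interpolation (input side).**
If `D` is invertible, `Wᴴ D V` is invertible, and every column of `D⁻¹ B` lies in the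
column space of `V` (i.e. `D⁻¹ B = V X` for some `X`), then the reduced transfer value
`(C V) (Wᴴ D V)⁻¹ (Wᴴ B)` equals the full transfer value `C D⁻¹ B`. -/
theorem stmt1 {n m p k : ℕ} (hn : 0 < n) (hm : 0 < m) (hp : 0 < p) (hk : 0 < k)
    (D : Matrix (Fin n) (Fin n) ℂ) (B : Matrix (Fin n) (Fin m) ℂ)
    (C : Matrix (Fin p) (Fin n) ℂ) (V W : Matrix (Fin n) (Fin k) ℂ)
    (hD : IsUnit D) (hred : IsUnit (Wᴴ * D * V))
    (X : Matrix (Fin k) (Fin m) ℂ) (hX : D⁻¹ * B = V * X) :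
    (C * V) * (Wᴴ * D * V)⁻¹ * (Wᴴ * B) = C * D⁻¹ * B := by
  have hB : B = D * (V * X) := by
    rw [← hX, ← Matrix.mul_assoc, mul_nonsing_inv _ (((isUnit_iff_isUnit_det D).mp hD)), Matrix.one_mul]
  have hWB : Wᴴ * B = (Wᴴ * D * V) * X := by
    rw [hB]; simp only [Matrix.mul_assoc]
  rw [hWB, Matrix.mul_assoc (C * V), ← Matrix.mul_assoc ((Wᴴ * D * V)⁻¹),
    nonsing_inv_mul _ (((isUnit_iff_isUnit_det _).mp hred)), Matrix.one_mul, Matrix.mul_assoc, ← hX,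
    ← Matrix.mul_assoc]
end

section
/- Let n, m, p, k be positive integers, D ∈ ℂ^{n×n} invertible, B ∈ ℂ^{n×m}, C ∈ ℂ^{p×n}, and V, W ∈ ℂ^{n×k} with Wᴴ D V invertible. If there exists Y ∈ ℂ^{k×p} with (Dᴴ)⁻¹ Cᴴ = W Y (i.e. every column of D⁻ᴴCᴴ lies in the column space of W), then (C V) (Wᴴ D V)⁻¹ (Wᴴ B) = C D⁻¹ B. -/
open Matrix

/-- **One-sided tangential interpolation (output side).**
If `D` is invertible, `Wᴴ D V` is invertible, and every column of `(Dᴴ)⁻¹ Cᴴ` lies in the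
column space of `W` (i.e. `(Dᴴ)⁻¹ Cᴴ = W Y` for some `Y`), then the reduced transfer value
`(C V) (Wᴴ D V)⁻¹ (Wᴴ B)` equals the full transfer value `C D⁻¹ B`. -/
theorem stmt2 {n m p k : ℕ} (hn : 0 < n) (hm : 0 < m) (hp : 0 < p) (hk : 0 < k)
    (D : Matrix (Fin n) (Fin n) ℂ) (B : Matrix (Fin n) (Fin m) ℂ)
    (C : Matrix (Fin p) (Fin n) ℂ) (V W : Matrix (Fin n) (Fin k) ℂ)
    (hD : IsUnit D) (hred : IsUnit (Wᴴ * D * V))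
    (Y : Matrix (Fin k) (Fin p) ℂ) (hY : (Dᴴ)⁻¹ * Cᴴ = W * Y) :
    (C * V) * (Wᴴ * D * V)⁻¹ * (Wᴴ * B) = C * D⁻¹ * B := by
  have hDdet : IsUnit D.det := (Matrix.isUnit_iff_isUnit_det D).mp hD
  have hDH : IsUnit Dᴴ.det := by
    simpa [Matrix.det_conjTranspose] using hDdet.star
  have hC : Cᴴ = Dᴴ * (W * Y) := by
    rw [← hY, ← Matrix.mul_assoc, Matrix.mul_nonsing_inv _ hDH, Matrix.one_mul]
  have hC' : C = Yᴴ * Wᴴ * D := by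
    have := congrArg conjTranspose hC
    simpa [Matrix.conjTranspose_mul, Matrix.mul_assoc] using this
  have hCV : C * V = Yᴴ * (Wᴴ * D * V) := by
    rw [hC']; simp [Matrix.mul_assoc]
  rw [hCV, Matrix.mul_assoc (Yᴴ),
    Matrix.mul_nonsing_inv _ ((Matrix.isUnit_iff_isUnit_det _).mp hred),
    Matrix.mul_one, hC', Matrix.mul_assoc (Yᴴ * Wᴴ),
    Matrix.mul_nonsing_inv _ hDdet, Matrix.mul_one, Matrix.mul_assoc]
end

section
/- Let n, m, p, k be positive integers, D ∈ ℂ^{n×n} invertible, B ∈ ℂ^{n×m}, C ∈ ℂ^{p×n}, and V, W ∈ ℂ^{n×k} with Wᴴ D V invertible. Suppose there exist X ∈ ℂ^{k×m} with D⁻¹ B = V X and Y ∈ ℂ^{k×p} with (Dᴴ)⁻¹ Cᴴ = W Y. Then for every matrix Δ ∈ ℂ^{n×n}, (C V) (Wᴴ D V)⁻¹ (Wᴴ Δ V) (Wᴴ D V)⁻¹ (Wᴴ B) = C D⁻¹ Δ D⁻¹ B. -/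
open Matrix

/-- **Two-sided (Hermite) interpolation identity.**
If `D` is invertible, `Wᴴ D V` is invertible, the columns of `D⁻¹ B` lie in the column
space of `V`, and the columns of `(Dᴴ)⁻¹ Cᴴ` lie in the column space of `W`, then for every
matrix `Δ`, `(C V) (Wᴴ D V)⁻¹ (Wᴴ Δ V) (Wᴴ D V)⁻¹ (Wᴴ B) = C D⁻¹ Δ D⁻¹ B`. -/
theorem stmt3 {n m p k : ℕ} (hn : 0 < n) (hm : 0 < m) (hp : 0 < p) (hk : 0 < k)
    (D : Matrix (Fin n) (Fin n) ℂ) (B : Matrix (Fin n) (Fin m) ℂ)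
    (C : Matrix (Fin p) (Fin n) ℂ) (V W : Matrix (Fin n) (Fin k) ℂ)
    (hD : IsUnit D) (hred : IsUnit (Wᴴ * D * V))
    (X : Matrix (Fin k) (Fin m) ℂ) (hX : D⁻¹ * B = V * X)
    (Y : Matrix (Fin k) (Fin p) ℂ) (hY : (Dᴴ)⁻¹ * Cᴴ = W * Y) :
    ∀ Δ : Matrix (Fin n) (Fin n) ℂ,
      (C * V) * (Wᴴ * D * V)⁻¹ * (Wᴴ * Δ * V) * (Wᴴ * D * V)⁻¹ * (Wᴴ * B) =
        C * D⁻¹ * Δ * D⁻¹ * B := by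
  intro Δ
  have hDdet : IsUnit D.det := (isUnit_iff_isUnit_det D).mp hD
  have hreddet : IsUnit (Wᴴ * D * V).det := (isUnit_iff_isUnit_det _).mp hred
  -- Wᴴ B = (Wᴴ D V) X
  have h1 : Wᴴ * B = (Wᴴ * D * V) * X := by
    have := congrArg (fun M => Wᴴ * D * M) hX
    simpa [Matrix.mul_assoc, Matrix.mul_nonsing_inv_cancel_left D B hDdet] using this
  -- (WᴴDV)⁻¹ Wᴴ B = X
  have h2 : (Wᴴ * D * V)⁻¹ * (Wᴴ * B) = X := by
    rw [h1, Matrix.nonsing_inv_mul_cancel_left _ _ hreddet]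
  -- C = Yᴴ Wᴴ D
  have hDHdet : IsUnit (Dᴴ).det := by
    rw [Matrix.det_conjTranspose]
    exact (starRingEnd ℂ).isUnit_map hDdet
  have h3 : C = Yᴴ * Wᴴ * D := by
    have h := congrArg (fun M => Dᴴ * M) hY
    simp only [Matrix.mul_nonsing_inv_cancel_left (Dᴴ) (Cᴴ) hDHdet] at h
    have := congrArg Matrix.conjTranspose h
    simpa [Matrix.conjTranspose_mul, Matrix.mul_assoc] using this
  -- C V (WᴴDV)⁻¹ = Yᴴ
  have h4 : C * V * (Wᴴ * D * V)⁻¹ = Yᴴ := by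
    rw [h3]
    rw [show Yᴴ * Wᴴ * D * V = Yᴴ * (Wᴴ * D * V) by simp [Matrix.mul_assoc]]
    rw [Matrix.mul_assoc, Matrix.mul_nonsing_inv _ hreddet, Matrix.mul_one]
  calc (C * V) * (Wᴴ * D * V)⁻¹ * (Wᴴ * Δ * V) * (Wᴴ * D * V)⁻¹ * (Wᴴ * B)
      = (C * V * (Wᴴ * D * V)⁻¹) * (Wᴴ * Δ * V) * ((Wᴴ * D * V)⁻¹ * (Wᴴ * B)) := by
        simp [Matrix.mul_assoc]
    _ = Yᴴ * (Wᴴ * Δ * V) * X := by rw [h2, h4]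
    _ = (Yᴴ * Wᴴ) * Δ * (V * X) := by simp [Matrix.mul_assoc]
    _ = C * D⁻¹ * Δ * D⁻¹ * B := by
        rw [← hX, h3]
        rw [show Yᴴ * Wᴴ * D * D⁻¹ = Yᴴ * Wᴴ * (D * D⁻¹) by simp [Matrix.mul_assoc],
          Matrix.mul_nonsing_inv _ hDdet, Matrix.mul_one]
        simp [Matrix.mul_assoc]
end

section
/- Let d, n, m, p, k be positive integers and let D : ℝ^d → ℂ^{n×n}, B : ℝ^d → ℂ^{n×m}, C : ℝ^d → ℂ^{p×n} be differentiable at a point μ₀ ∈ ℝ^d. Fix V, W ∈ ℂ^{n×k} and assume: D(μ₀) is invertible, Wᴴ D(μ₀) V is invertible, and there exist X ∈ ℂ^{k×m} and Y ∈ ℂ^{k×p} with D(μ₀)⁻¹ B(μ₀) = V X and (D(μ₀)ᴴ)⁻¹ C(μ₀)ᴴ = W Y. Define H(μ) := C(μ) D(μ)⁻¹ B(μ) and Hʳ(μ) := (C(μ) V)(Wᴴ D(μ) V)⁻¹ (Wᴴ B(μ)). Then H(μ₀) = Hʳ(μ₀), both H and Hʳ are differentiable at μ₀, and their Fréchet derivatives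 at μ₀ coincide. -/
/-!
Writing `K = Wᴴ D V`, for every `μ` at which `D μ` and `K μ` are invertible one has the exact
error formula
`H - Hʳ = (C D⁻¹ - C V K⁻¹ Wᴴ) · D · (D⁻¹ B - V K⁻¹ Wᴴ B)`.
The subspace condition `D⁻¹ B ∈ range V` kills the right factor at `μ₀`, and the condition
`(Dᴴ)⁻¹ Cᴴ ∈ range W` kills the left one. So `H - Hʳ` is, near `μ₀`, a product of two differentiable
functions both vanishing at `μ₀`; it vanishes there to second order, hence `H` and `Hʳ` agree at
`μ₀` together with their first derivatives.
-/

open Matrix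

attribute [local instance] Matrix.normedAddCommGroup Matrix.normedSpace

section ReducedTransferFunction

variable {R : Type*} [CommRing R] {n k m p : Type*} [Fintype n] [Fintype k] [DecidableEq n]
  [DecidableEq k] {D : Matrix n n R} {B : Matrix n m R} {C : Matrix p n R} {V : Matrix n k R}
  {L : Matrix k n R}

theorem transfer_eq_reduced_add_error (hD : IsUnit D) (hK : IsUnit (L * D * V)) :
    C * D⁻¹ * B = C * V * (L * D * V)⁻¹ * (L * B) +
      (C * D⁻¹ - C * V * (L * D * V)⁻¹ * L) * (D * (D⁻¹ * B - V * ((L * D * V)⁻¹ * (L * B)))) := by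
  have hD' := (isUnit_iff_isUnit_det D).1 hD
  have hKK : L * (D * (V * ((L * D * V)⁻¹ * (L * B)))) = L * B := by
    simp only [← Matrix.mul_assoc]
    rw [mul_nonsing_inv _ ((isUnit_iff_isUnit_det _).1 hK), Matrix.one_mul]
  generalize (L * D * V)⁻¹ = Q at hKK ⊢
  simp only [Matrix.mul_sub, Matrix.sub_mul, Matrix.mul_assoc, mul_nonsing_inv_cancel_left _ _ hD',
    nonsing_inv_mul_cancel_left _ _ hD', hKK]
  abel

theorem inv_mul_sub_reduced_eq_zero {X : Matrix k m R} (hD : IsUnit D) (hK : IsUnit (L * D * V))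
    (hX : D⁻¹ * B = V * X) : D⁻¹ * B - V * ((L * D * V)⁻¹ * (L * B)) = 0 := by
  have hLB : L * B = L * D * V * X := by
    rw [Matrix.mul_assoc _ V, ← hX, Matrix.mul_assoc,
      mul_nonsing_inv_cancel_left _ _ ((isUnit_iff_isUnit_det D).1 hD)]
  rw [hLB, nonsing_inv_mul_cancel_left _ _ ((isUnit_iff_isUnit_det _).1 hK), hX, sub_self]

theorem mul_inv_sub_reduced_eq_zero {Z : Matrix p k R} (hD : IsUnit D) (hK : IsUnit (L * D * V))
    (hZ : C * D⁻¹ = Z * L) : C * D⁻¹ - C * V * (L * D * V)⁻¹ * L = 0 := by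
  have hCV : C * V = Z * (L * D * V) := by
    rw [← Matrix.mul_assoc, ← Matrix.mul_assoc Z, ← hZ, Matrix.mul_assoc, Matrix.mul_assoc,
      nonsing_inv_mul_cancel_left _ _ ((isUnit_iff_isUnit_det D).1 hD)]
  rw [hCV, mul_nonsing_inv_cancel_right _ _ ((isUnit_iff_isUnit_det _).1 hK), hZ, sub_self]

theorem transfer_eq_reduced {X : Matrix k m R} (hD : IsUnit D) (hK : IsUnit (L * D * V))
    (hX : D⁻¹ * B = V * X) : C * D⁻¹ * B = C * V * (L * D * V)⁻¹ * (L * B) := by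
  rw [transfer_eq_reduced_add_error hD hK, inv_mul_sub_reduced_eq_zero hD hK hX,
    Matrix.mul_zero, Matrix.mul_zero, add_zero]

end ReducedTransferFunction

section MatrixCalculus

variable {𝕜 : Type*} [RCLike 𝕜] {E : Type*} [NormedAddCommGroup E] [NormedSpace ℝ E] {x : E}
  {l m n : Type*} [Fintype l] [Fintype m] [Fintype n]

noncomputable def matrixMulCLM : Matrix l m 𝕜 →L[ℝ] Matrix m n 𝕜 →L[ℝ] Matrix l n 𝕜 :=
  LinearMap.toContinuousLinearMap
    (LinearMap.toContinuousLinearMap.toLinearMap ∘ₗ mulLinearMap ℝ)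

theorem DifferentiableAt.matrix_mul {f : E → Matrix l m 𝕜} {g : E → Matrix m n 𝕜}
    (hf : DifferentiableAt ℝ f x) (hg : DifferentiableAt ℝ g x) :
    DifferentiableAt ℝ (fun y => f y * g y) x :=
  (matrixMulCLM.hasFDerivAt_of_bilinear hf.hasFDerivAt hg.hasFDerivAt).differentiableAt

theorem hasFDerivAt_matrix_mul_of_eq_zero {f : E → Matrix l m 𝕜} {g : E → Matrix m n 𝕜}
    (hf : DifferentiableAt ℝ f x) (hg : DifferentiableAt ℝ g x) (hf0 : f x = 0) (hg0 : g x = 0) :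
    HasFDerivAt (fun y => f y * g y) (0 : E →L[ℝ] Matrix l n 𝕜) x := by
  have h := matrixMulCLM.hasFDerivAt_of_bilinear hf.hasFDerivAt hg.hasFDerivAt
  rw [hf0, hg0] at h
  refine h.congr_fderiv ?_
  simp only [map_zero, add_zero]
  -- the two zero maps carry different, definitionally equal, module structures on matrices
  rfl

variable [DecidableEq n]

theorem DifferentiableAt.matrix_det {f : E → Matrix n n 𝕜} (hf : DifferentiableAt ℝ f x) :
    DifferentiableAt ℝ (fun y => (f y).det) x := by
  simp only [det_apply']
  fun_prop

theorem DifferentiableAt.matrix_adjugate {f : E → Matrix n n 𝕜} (hf : DifferentiableAt ℝ f x) :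
    DifferentiableAt ℝ (fun y => (f y).adjugate) x := by
  refine differentiableAt_pi.2 fun i => differentiableAt_pi.2 fun j => ?_
  simp only [adjugate_apply]
  refine DifferentiableAt.matrix_det (differentiableAt_pi.2 fun i' => ?_)
  rcases eq_or_ne i' j with rfl | h
  · simp [differentiableAt_const]
  · simpa [updateRow_ne h] using differentiableAt_pi.1 hf i'

theorem DifferentiableAt.matrix_inv {f : E → Matrix n n 𝕜} (hf : DifferentiableAt ℝ f x)
    (hx : IsUnit (f x)) : DifferentiableAt ℝ (fun y => (f y)⁻¹) x := by
  simp only [inv_def, Ring.inverse_eq_inv']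
  exact (hf.matrix_det.inv ((isUnit_iff_isUnit_det _).1 hx).ne_zero).smul hf.matrix_adjugate

end MatrixCalculus

theorem ContinuousAt.eventually_isUnit_matrix {𝕜 X n : Type*} [RCLike 𝕜] [TopologicalSpace X]
    [Fintype n] [DecidableEq n] {f : X → Matrix n n 𝕜} {x : X} (hf : ContinuousAt f x)
    (hx : IsUnit (f x)) : ∀ᶠ y in nhds x, IsUnit (f y) := by
  simp only [isUnit_iff_isUnit_det, isUnit_iff_ne_zero] at hx ⊢
  exact (continuous_id.matrix_det.continuousAt.comp hf).eventually_ne hx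

section Interpolation

variable {𝕜 : Type*} [RCLike 𝕜] {E : Type*} [NormedAddCommGroup E] [NormedSpace ℝ E] {x : E}
  {n k m p : Type*} [Fintype n] [Fintype k] [Fintype m] [Fintype p] [DecidableEq k]
  {D : E → Matrix n n 𝕜} {B : E → Matrix n m 𝕜} {C : E → Matrix p n 𝕜} {V : Matrix n k 𝕜}
  {L : Matrix k n 𝕜}

theorem DifferentiableAt.transfer [DecidableEq n] (hD : DifferentiableAt ℝ D x)
    (hB : DifferentiableAt ℝ B x) (hC : DifferentiableAt ℝ C x) (hDx : IsUnit (D x)) :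
    DifferentiableAt ℝ (fun y => C y * (D y)⁻¹ * B y) x :=
  (hC.matrix_mul (hD.matrix_inv hDx)).matrix_mul hB

theorem DifferentiableAt.reducedTransfer (hD : DifferentiableAt ℝ D x)
    (hB : DifferentiableAt ℝ B x) (hC : DifferentiableAt ℝ C x) (hKx : IsUnit (L * D x * V)) :
    DifferentiableAt ℝ (fun y => C y * V * (L * D y * V)⁻¹ * (L * B y)) x :=
  DifferentiableAt.transfer (D := fun y => L * D y * V)
    (((differentiableAt_const L).matrix_mul hD).matrix_mul (differentiableAt_const V))
    ((differentiableAt_const L).matrix_mul hB) (hC.matrix_mul (differentiableAt_const V)) hKx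

theorem fderiv_transfer_eq_fderiv_reducedTransfer [DecidableEq n] {X : Matrix k m 𝕜}
    {Z : Matrix p k 𝕜}
    (hD : DifferentiableAt ℝ D x) (hB : DifferentiableAt ℝ B x) (hC : DifferentiableAt ℝ C x)
    (hDx : IsUnit (D x)) (hKx : IsUnit (L * D x * V))
    (hX : (D x)⁻¹ * B x = V * X) (hZ : C x * (D x)⁻¹ = Z * L) :
    fderiv ℝ (fun y => C y * (D y)⁻¹ * B y) x =
      fderiv ℝ (fun y => C y * V * (L * D y * V)⁻¹ * (L * B y)) x := by
  have hK : DifferentiableAt ℝ (fun y => L * D y * V) x :=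
    ((differentiableAt_const L).matrix_mul hD).matrix_mul (differentiableAt_const V)
  have hDinv := hD.matrix_inv hDx
  have hKinv := hK.matrix_inv hKx
  have hleft : DifferentiableAt ℝ (fun y => C y * (D y)⁻¹ - C y * V * (L * D y * V)⁻¹ * L) x :=
    (hC.matrix_mul hDinv).sub (((hC.matrix_mul (differentiableAt_const V)).matrix_mul
      hKinv).matrix_mul (differentiableAt_const L))
  have hright : DifferentiableAt ℝ
      (fun y => D y * ((D y)⁻¹ * B y - V * ((L * D y * V)⁻¹ * (L * B y)))) x :=
    hD.matrix_mul ((hDinv.matrix_mul hB).sub ((differentiableAt_const V).matrix_mul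
      (hKinv.matrix_mul ((differentiableAt_const L).matrix_mul hB))))
  have hsplit : (fun y => C y * (D y)⁻¹ * B y) =ᶠ[nhds x]
      fun y => C y * V * (L * D y * V)⁻¹ * (L * B y) +
        (C y * (D y)⁻¹ - C y * V * (L * D y * V)⁻¹ * L) *
          (D y * ((D y)⁻¹ * B y - V * ((L * D y * V)⁻¹ * (L * B y)))) := by
    filter_upwards [hD.continuousAt.eventually_isUnit_matrix hDx,
      hK.continuousAt.eventually_isUnit_matrix hKx] with y hDy hKy
    exact transfer_eq_reduced_add_error hDy hKy
  have herror := hasFDerivAt_matrix_mul_of_eq_zero hleft hright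
    (mul_inv_sub_reduced_eq_zero hDx hKx hZ)
    (by rw [inv_mul_sub_reduced_eq_zero hDx hKx hX, Matrix.mul_zero])
  exact ((((hD.reducedTransfer hB hC hKx).hasFDerivAt.add herror).congr_of_eventuallyEq
    hsplit).fderiv).trans (add_zero _)

end Interpolation

theorem stmt4_general {d n m p k : ℕ}
    (D : (Fin d → ℝ) → Matrix (Fin n) (Fin n) ℂ)
    (B : (Fin d → ℝ) → Matrix (Fin n) (Fin m) ℂ)
    (C : (Fin d → ℝ) → Matrix (Fin p) (Fin n) ℂ)
    (μ₀ : Fin d → ℝ)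
    (hD : DifferentiableAt ℝ D μ₀) (hB : DifferentiableAt ℝ B μ₀)
    (hC : DifferentiableAt ℝ C μ₀)
    (V W : Matrix (Fin n) (Fin k) ℂ)
    (hinv : IsUnit (D μ₀)) (hred : IsUnit (Wᴴ * D μ₀ * V))
    (X : Matrix (Fin k) (Fin m) ℂ) (hX : (D μ₀)⁻¹ * B μ₀ = V * X)
    (Y : Matrix (Fin k) (Fin p) ℂ) (hY : ((D μ₀)ᴴ)⁻¹ * (C μ₀)ᴴ = W * Y) :
    (fun μ => C μ * (D μ)⁻¹ * B μ) μ₀ =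
        (fun μ => (C μ * V) * (Wᴴ * D μ * V)⁻¹ * (Wᴴ * B μ)) μ₀ ∧
      DifferentiableAt ℝ (fun μ => C μ * (D μ)⁻¹ * B μ) μ₀ ∧
      DifferentiableAt ℝ (fun μ => (C μ * V) * (Wᴴ * D μ * V)⁻¹ * (Wᴴ * B μ)) μ₀ ∧
      fderiv ℝ (fun μ => C μ * (D μ)⁻¹ * B μ) μ₀ =
        fderiv ℝ (fun μ => (C μ * V) * (Wᴴ * D μ * V)⁻¹ * (Wᴴ * B μ)) μ₀ := by
  have hZ : C μ₀ * (D μ₀)⁻¹ = Yᴴ * Wᴴ := by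
    simpa [conjTranspose_nonsing_inv] using congrArg conjTranspose hY
  exact ⟨transfer_eq_reduced hinv hred hX, hD.transfer hB hC hinv,
    hD.reducedTransfer hB hC hred,
    fderiv_transfer_eq_fderiv_reducedTransfer hD hB hC hinv hred hX hZ⟩

/-- **Hermite interpolation in the parameter.**
Let `D, B, C` be matrix-valued functions of a parameter `μ ∈ ℝ^d`, differentiable at `μ₀`,
with `D μ₀` and `Wᴴ D(μ₀) V` invertible, and suppose the two-sided subspace conditions
`D(μ₀)⁻¹ B(μ₀) = V X` and `(D(μ₀)ᴴ)⁻¹ C(μ₀)ᴴ = W Y` hold. Then the full transfer function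
`H(μ) = C(μ) D(μ)⁻¹ B(μ)` and the reduced one
`Hʳ(μ) = (C(μ) V)(Wᴴ D(μ) V)⁻¹ (Wᴴ B(μ))` agree at `μ₀`, are both differentiable at `μ₀`,
and have the same (Fréchet) derivative there. -/
theorem stmt4 {d n m p k : ℕ} (hd : 0 < d) (hn : 0 < n) (hm : 0 < m) (hp : 0 < p)
    (hk : 0 < k)
    (D : (Fin d → ℝ) → Matrix (Fin n) (Fin n) ℂ)
    (B : (Fin d → ℝ) → Matrix (Fin n) (Fin m) ℂ)
    (C : (Fin d → ℝ) → Matrix (Fin p) (Fin n) ℂ)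
    (μ₀ : Fin d → ℝ)
    (hD : DifferentiableAt ℝ D μ₀) (hB : DifferentiableAt ℝ B μ₀)
    (hC : DifferentiableAt ℝ C μ₀)
    (V W : Matrix (Fin n) (Fin k) ℂ)
    (hinv : IsUnit (D μ₀)) (hred : IsUnit (Wᴴ * D μ₀ * V))
    (X : Matrix (Fin k) (Fin m) ℂ) (hX : (D μ₀)⁻¹ * B μ₀ = V * X)
    (Y : Matrix (Fin k) (Fin p) ℂ) (hY : ((D μ₀)ᴴ)⁻¹ * (C μ₀)ᴴ = W * Y) :
    (fun μ => C μ * (D μ)⁻¹ * B μ) μ₀ =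
        (fun μ => (C μ * V) * (Wᴴ * D μ * V)⁻¹ * (Wᴴ * B μ)) μ₀ ∧
      DifferentiableAt ℝ (fun μ => C μ * (D μ)⁻¹ * B μ) μ₀ ∧
      DifferentiableAt ℝ (fun μ => (C μ * V) * (Wᴴ * D μ * V)⁻¹ * (Wᴴ * B μ)) μ₀ ∧
      fderiv ℝ (fun μ => C μ * (D μ)⁻¹ * B μ) μ₀ =
        fderiv ℝ (fun μ => (C μ * V) * (Wᴴ * D μ * V)⁻¹ * (Wᴴ * B μ)) μ₀ :=
  stmt4_general D B C μ₀ hD hB hC V W hinv hred X hX Y hY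
end

section
/- Let d, n, m, p be positive integers and β > 0. Let D : ℝ^d × ℝ → ℂ^{n×n}, B : ℝ^d → ℂ^{n×m}, C : ℝ^d → ℂ^{p×n} be continuously differentiable on a neighborhood of a point (μ*, ω*). Then there exist η_μ > 0, η_ω > 0 and γ > 0 such that for every positive integer k and all V, W ∈ ℂ^{n×k} with orthonormal columns satisfying ‖(Wᴴ D(μ*, ω*) V) x‖ ≥ β for all unit vectors x ∈ ℂ^k, the following hold: (a) Wᴴ D(μ, ω) V is invertible for all μ with ‖μ − μ*‖ ≤ η_μ and all ω with |ω − ω*| ≤ η_ω; (b) the reduced transfer function H^{V,W}(μ, ω) := (C(μ) V)(Wᴴ D(μ, ω) V)⁻¹ (Wᴴ B(μ)) satisfies ‖H^{V,W}(μ̃, ω) − H^{V,W}(μ, ω)‖ ≤ γ ‖μ̃ − μ‖ and ‖H^{V,W}(μ, ω̃) − H^{V,W}(μ, ω)‖ ≤ γ |ω̃ − ω| for all μ̃, μ in the closed ball of radius η_μ about μ* and all ω̃, ω in the closed interval of radius η_ω about ω*. The constants η_μ, η_ω, γ do not depend on k, V, W. -/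
open Matrix Metric
open scoped Matrix.Norms.L2Operator

/-!
A lower bound `β‖x‖ ≤ ‖A x‖` survives perturbations of `A` of spectral norm at most `β / 2`,
and compressing `X ↦ Wᴴ X V` by matrices with orthonormal columns does not increase spectral
norms. Hence on a ball where `K_D η ≤ β / 2`, with `K_D` a local Lipschitz constant of `D`, every
compressed pencil `Wᴴ D V` is invertible with `‖(Wᴴ D V)⁻¹‖ ≤ 2 / β`, whatever `k`, `V` and `W`.
The Lipschitz bound then comes from
`P' A'⁻¹ R' - P A⁻¹ R = (P' - P) A'⁻¹ R' + P A'⁻¹ (A - A') A⁻¹ R' + P A⁻¹ (R' - R)`,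
in which every factor is bounded independently of `V` and `W`.
-/

open Filter Topology
open scoped NNReal

theorem LinearMap.mul_norm_le_norm_apply_of_norm_eq_one {𝕜 E F : Type*} [RCLike 𝕜]
    [NormedAddCommGroup E] [NormedSpace 𝕜 E] [NormedAddCommGroup F] [NormedSpace 𝕜 F]
    (f : E →ₗ[𝕜] F) {c : ℝ} (h : ∀ x, ‖x‖ = 1 → c ≤ ‖f x‖) (x : E) : c * ‖x‖ ≤ ‖f x‖ := by
  obtain rfl | hx := eq_or_ne x 0
  · simp
  simpa [norm_smul, field] using h ((‖x‖⁻¹ : 𝕜) • x) (norm_smul_inv_norm hx)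

theorem LipschitzOnWith.eventually_closedBall {X Y : Type*} [PseudoMetricSpace X]
    [PseudoEMetricSpace Y] {f : X → Y} {K : ℝ≥0} {t : Set X} {x : X} (hf : LipschitzOnWith K f t)
    (ht : t ∈ 𝓝 x) : ∀ᶠ r in 𝓝 (0 : ℝ), LipschitzOnWith K f (closedBall x r) := by
  obtain ⟨ε, hε, hεt⟩ := nhds_basis_closedBall.mem_iff.1 ht
  filter_upwards [Iio_mem_nhds hε] with r hr
  exact hf.mono ((closedBall_subset_closedBall hr.le).trans hεt)

theorem LipschitzOnWith.norm_sub_le_mul_dist {X E : Type*} [PseudoMetricSpace X]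
    [SeminormedAddCommGroup E] {f : X → E} {K : ℝ≥0} {s : Set X} {x y : X}
    (hf : LipschitzOnWith K f s) (hx : x ∈ s) (hy : y ∈ s) : ‖f x - f y‖ ≤ K * dist x y := by
  rw [← dist_eq_norm]
  exact hf.dist_le_mul x hx y hy

theorem LipschitzOnWith.norm_sub_le_of_mem_closedBall {X E : Type*} [PseudoMetricSpace X]
    [SeminormedAddCommGroup E] {f : X → E} {K : ℝ≥0} {x₀ x : X} {r : ℝ}
    (hf : LipschitzOnWith K f (closedBall x₀ r)) (hx : x ∈ closedBall x₀ r) :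
    ‖f x - f x₀‖ ≤ K * r :=
  (hf.norm_sub_le_mul_dist hx (mem_closedBall_self (dist_nonneg.trans hx))).trans
    (by gcongr; exact hx)

theorem LipschitzOnWith.norm_le_of_mem_closedBall {X E : Type*} [PseudoMetricSpace X]
    [SeminormedAddCommGroup E] {f : X → E} {K : ℝ≥0} {x₀ x : X} {r : ℝ}
    (hf : LipschitzOnWith K f (closedBall x₀ r)) (hx : x ∈ closedBall x₀ r) :
    ‖f x‖ ≤ ‖f x₀‖ + K * r :=
  (norm_le_norm_add_norm_sub' _ (f x₀)).trans (by gcongr; exact hf.norm_sub_le_of_mem_closedBall hx)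

namespace Matrix

variable {𝕜 : Type*} [RCLike 𝕜]

theorem l2_opNorm_le_one_of_conjTranspose_mul_self_eq_one {n k : Type*} [Fintype n] [Fintype k]
    [DecidableEq k] {V : Matrix n k 𝕜} (hV : Vᴴ * V = 1) : ‖V‖ ≤ 1 := by
  have hone : ‖(1 : Matrix k k 𝕜)‖ ≤ 1 := by
    rw [cstar_norm_def, map_one]
    exact ContinuousLinearMap.norm_id_le
  rw [← hV, l2_opNorm_conjTranspose_mul_self] at hone
  nlinarith [norm_nonneg V]

theorem l2_opNorm_mul_le_of_norm_le_one_left {m n k : Type*} [Fintype m] [Fintype n] [Fintype k]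
    [DecidableEq n] [DecidableEq k] {W : Matrix m n 𝕜} (hW : ‖W‖ ≤ 1) (A : Matrix n k 𝕜) :
    ‖W * A‖ ≤ ‖A‖ :=
  (l2_opNorm_mul _ _).trans (mul_le_of_le_one_left (norm_nonneg _) hW)

theorem l2_opNorm_mul_le_of_norm_le_one_right {m n k : Type*} [Fintype m] [Fintype n] [Fintype k]
    [DecidableEq n] [DecidableEq k] {V : Matrix n k 𝕜} (hV : ‖V‖ ≤ 1) (A : Matrix m n 𝕜) :
    ‖A * V‖ ≤ ‖A‖ :=
  (l2_opNorm_mul _ _).trans (mul_le_of_le_one_right (norm_nonneg _) hV)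

theorem l2_opNorm_conjTranspose_mul_mul_le {m n k l : Type*} [Fintype m] [Fintype n] [Fintype k]
    [Fintype l] [DecidableEq m] [DecidableEq n] [DecidableEq k] [DecidableEq l]
    {V : Matrix n k 𝕜} {W : Matrix m l 𝕜} (hV : Vᴴ * V = 1) (hW : Wᴴ * W = 1)
    (M : Matrix m n 𝕜) : ‖Wᴴ * M * V‖ ≤ ‖M‖ := by
  have hWn : ‖Wᴴ‖ ≤ 1 := by
    rw [l2_opNorm_conjTranspose]; exact l2_opNorm_le_one_of_conjTranspose_mul_self_eq_one hW
  exact (l2_opNorm_mul_le_of_norm_le_one_right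
    (l2_opNorm_le_one_of_conjTranspose_mul_self_eq_one hV) _).trans
    (l2_opNorm_mul_le_of_norm_le_one_left hWn _)

theorem l2_opNorm_mul_mul_le {m n l k : Type*} [Fintype m] [Fintype n] [Fintype l] [Fintype k]
    [DecidableEq n] [DecidableEq l] [DecidableEq k]
    (A : Matrix m n 𝕜) (B : Matrix n l 𝕜) (C : Matrix l k 𝕜) : ‖A * B * C‖ ≤ ‖A‖ * ‖B‖ * ‖C‖ :=
  (l2_opNorm_mul _ _).trans (by gcongr; exact l2_opNorm_mul _ _)

theorem sub_mul_norm_le_norm_toEuclideanLin {m n : Type*} [Fintype m] [Fintype n] [DecidableEq n]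
    {A A' : Matrix m n 𝕜} {c : ℝ} (h : ∀ x, c * ‖x‖ ≤ ‖toEuclideanLin A x‖)
    (x : EuclideanSpace 𝕜 n) : (c - ‖A' - A‖) * ‖x‖ ≤ ‖toEuclideanLin A' x‖ := by
  have hdiff : ‖toEuclideanLin (A' - A) x‖ ≤ ‖A' - A‖ * ‖x‖ := l2_opNorm_mulVec _ x
  rw [map_sub, LinearMap.sub_apply] at hdiff
  linarith [h x, norm_sub_norm_le (toEuclideanLin A x) (toEuclideanLin A' x),
    norm_sub_rev (toEuclideanLin A' x) (toEuclideanLin A x)]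

theorem isUnit_and_l2_opNorm_inv_le {n : Type*} [Fintype n] [DecidableEq n] {A : Matrix n n 𝕜}
    {c : ℝ} (hc : 0 < c) (h : ∀ x, c * ‖x‖ ≤ ‖toEuclideanLin A x‖) :
    IsUnit A ∧ ‖A⁻¹‖ ≤ c⁻¹ := by
  have hinj : Function.Injective (toEuclideanLin A) := by
    refine (injective_iff_map_eq_zero _).2 fun x hx => norm_le_zero_iff.1 ?_
    have := h x
    rw [hx, norm_zero] at this
    exact nonpos_of_mul_nonpos_right this hc
  have hA : IsUnit A := mulVec_injective_iff_isUnit.1 fun v w hvw =>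
    WithLp.toLp_injective 2 (hinj (congrArg (WithLp.toLp 2) hvw))
  refine ⟨hA, ContinuousLinearMap.opNorm_le_bound _ (by positivity) fun y => ?_⟩
  have hy : toEuclideanCLM (n := n) (𝕜 := 𝕜) A (toEuclideanCLM (n := n) (𝕜 := 𝕜) A⁻¹ y) = y := by
    rw [← mul_apply_eq_comp, ← map_mul, mul_nonsing_inv _ ((isUnit_iff_isUnit_det _).1 hA),
      map_one, one_apply_eq_self]
  have := h (toEuclideanCLM (n := n) (𝕜 := 𝕜) A⁻¹ y)
  rw [← coe_toEuclideanCLM_eq_toEuclideanLin, ContinuousLinearMap.coe_coe, hy] at this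
  rw [inv_mul_eq_div, le_div_iff₀' hc]
  exact this

theorem isUnit_and_l2_opNorm_inv_le_of_l2_opNorm_sub_le {n : Type*} [Fintype n] [DecidableEq n]
    {A A' : Matrix n n 𝕜} {c : ℝ} (hc : 0 < c) (h : ∀ x, c * ‖x‖ ≤ ‖toEuclideanLin A x‖)
    (hA' : ‖A' - A‖ ≤ c / 2) : IsUnit A' ∧ ‖A'⁻¹‖ ≤ (c / 2)⁻¹ :=
  isUnit_and_l2_opNorm_inv_le (half_pos hc) fun x =>
    calc c / 2 * ‖x‖ ≤ (c - ‖A' - A‖) * ‖x‖ := by gcongr; linarith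
      _ ≤ ‖toEuclideanLin A' x‖ := sub_mul_norm_le_norm_toEuclideanLin h x

theorem l2_opNorm_mul_inv_mul_sub_le {p k m : Type*} [Fintype p] [Fintype k] [Fintype m]
    [DecidableEq k] [DecidableEq m] {P P' : Matrix p k 𝕜} {A A' : Matrix k k 𝕜}
    {R R' : Matrix k m 𝕜} (hA : IsUnit A) (hA' : IsUnit A') :
    ‖P' * A'⁻¹ * R' - P * A⁻¹ * R‖ ≤ ‖P' - P‖ * ‖A'⁻¹‖ * ‖R'‖ +
      ‖P‖ * (‖A'⁻¹‖ * ‖A - A'‖ * ‖A⁻¹‖) * ‖R'‖ + ‖P‖ * ‖A⁻¹‖ * ‖R' - R‖ := by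
  have hinv : A'⁻¹ - A⁻¹ = A'⁻¹ * (A - A') * A⁻¹ := by
    rw [Matrix.mul_sub, Matrix.sub_mul, Matrix.mul_assoc,
      mul_nonsing_inv _ ((isUnit_iff_isUnit_det _).1 hA), Matrix.mul_one,
      nonsing_inv_mul _ ((isUnit_iff_isUnit_det _).1 hA'), Matrix.one_mul]
  have hsplit : P' * A'⁻¹ * R' - P * A⁻¹ * R = (P' - P) * A'⁻¹ * R' +
      P * (A'⁻¹ * (A - A') * A⁻¹) * R' + P * A⁻¹ * (R' - R) := by
    rw [← hinv]
    simp only [Matrix.sub_mul, Matrix.mul_sub, Matrix.mul_assoc]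
    abel
  rw [hsplit]
  refine (norm_add₃_le ..).trans (add_le_add_three (l2_opNorm_mul_mul_le _ _ _) ?_
    (l2_opNorm_mul_mul_le _ _ _))
  exact (l2_opNorm_mul_mul_le _ _ _).trans (by gcongr; exact l2_opNorm_mul_mul_le _ _ _)

end Matrix

section ReducedTransfer

variable {𝕜 X : Type*} [RCLike 𝕜] [PseudoMetricSpace X] {n m p : Type*} [Fintype n] [Fintype m]
  [Fintype p] [DecidableEq n] [DecidableEq m]

noncomputable def reducedTransfer {k : Type*} [Fintype k] [DecidableEq k] (C : X → Matrix p n 𝕜)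
    (D : X → Matrix n n 𝕜) (B : X → Matrix n m 𝕜) (V W : Matrix n k 𝕜) (x : X) :
    Matrix p m 𝕜 :=
  C x * V * (Wᴴ * D x * V)⁻¹ * (Wᴴ * B x)

theorem exists_uniform_lipschitz_reducedTransfer {C : X → Matrix p n 𝕜} {D : X → Matrix n n 𝕜}
    {B : X → Matrix n m 𝕜} {x₀ : X} {η β : ℝ} {KC KD KB : ℝ≥0} (hη : 0 ≤ η) (hβ : 0 < β)
    (hC : LipschitzOnWith KC C (closedBall x₀ η)) (hD : LipschitzOnWith KD D (closedBall x₀ η))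
    (hB : LipschitzOnWith KB B (closedBall x₀ η)) (hKD : KD * η ≤ β / 2) :
    ∃ γ > 0, ∀ (k : ℕ) (V W : Matrix n (Fin k) 𝕜), Vᴴ * V = 1 → Wᴴ * W = 1 →
      (∀ x, β * ‖x‖ ≤ ‖toEuclideanLin (Wᴴ * D x₀ * V) x‖) →
      (∀ x ∈ closedBall x₀ η, IsUnit (Wᴴ * D x * V)) ∧
      ∀ x ∈ closedBall x₀ η, ∀ y ∈ closedBall x₀ η,
        ‖reducedTransfer C D B V W x - reducedTransfer C D B V W y‖ ≤ γ * dist x y := by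
  set g := (β / 2)⁻¹
  set MC := ‖C x₀‖ + KC * η
  set MB := ‖B x₀‖ + KB * η
  set γ := KC * g * MB + MC * (g * KD * g) * MB + MC * g * KB
  refine ⟨γ + 1, by positivity, fun k V W hV hW hβVW => ?_⟩
  have hVn : ‖V‖ ≤ 1 := l2_opNorm_le_one_of_conjTranspose_mul_self_eq_one hV
  have hWn : ‖Wᴴ‖ ≤ 1 := by
    rw [l2_opNorm_conjTranspose]; exact l2_opNorm_le_one_of_conjTranspose_mul_self_eq_one hW
  have hinv : ∀ x ∈ closedBall x₀ η, IsUnit (Wᴴ * D x * V) ∧ ‖(Wᴴ * D x * V)⁻¹‖ ≤ g :=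
    fun x hx => isUnit_and_l2_opNorm_inv_le_of_l2_opNorm_sub_le hβ hβVW <| by
      rw [← Matrix.sub_mul, ← Matrix.mul_sub]
      exact (l2_opNorm_conjTranspose_mul_mul_le hV hW _).trans
        ((hD.norm_sub_le_of_mem_closedBall hx).trans hKD)
  refine ⟨fun x hx => (hinv x hx).1, fun x hx y hy => ?_⟩
  have hCy : ‖C y * V‖ ≤ MC :=
    (l2_opNorm_mul_le_of_norm_le_one_right hVn _).trans (hC.norm_le_of_mem_closedBall hy)
  have hBx : ‖Wᴴ * B x‖ ≤ MB :=
    (l2_opNorm_mul_le_of_norm_le_one_left hWn _).trans (hB.norm_le_of_mem_closedBall hx)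
  have hdC : ‖C x * V - C y * V‖ ≤ KC * dist x y := by
    rw [← Matrix.sub_mul]
    exact (l2_opNorm_mul_le_of_norm_le_one_right hVn _).trans (hC.norm_sub_le_mul_dist hx hy)
  have hdD : ‖Wᴴ * D y * V - Wᴴ * D x * V‖ ≤ KD * dist x y := by
    rw [← Matrix.sub_mul, ← Matrix.mul_sub, dist_comm]
    exact (l2_opNorm_conjTranspose_mul_mul_le hV hW _).trans (hD.norm_sub_le_mul_dist hy hx)
  have hdB : ‖Wᴴ * B x - Wᴴ * B y‖ ≤ KB * dist x y := by
    rw [← Matrix.mul_sub]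
    exact (l2_opNorm_mul_le_of_norm_le_one_left hWn _).trans (hB.norm_sub_le_mul_dist hx hy)
  obtain ⟨hAx, hgx⟩ := hinv x hx
  obtain ⟨hAy, hgy⟩ := hinv y hy
  calc ‖reducedTransfer C D B V W x - reducedTransfer C D B V W y‖
      ≤ ‖C x * V - C y * V‖ * ‖(Wᴴ * D x * V)⁻¹‖ * ‖Wᴴ * B x‖ +
          ‖C y * V‖ * (‖(Wᴴ * D x * V)⁻¹‖ * ‖Wᴴ * D y * V - Wᴴ * D x * V‖ *
            ‖(Wᴴ * D y * V)⁻¹‖) * ‖Wᴴ * B x‖ +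
          ‖C y * V‖ * ‖(Wᴴ * D y * V)⁻¹‖ * ‖Wᴴ * B x - Wᴴ * B y‖ :=
        l2_opNorm_mul_inv_mul_sub_le hAy hAx
    _ ≤ KC * dist x y * g * MB + MC * (g * (KD * dist x y) * g) * MB +
          MC * g * (KB * dist x y) := by gcongr
    _ = γ * dist x y := by ring
    _ ≤ (γ + 1) * dist x y := by gcongr; linarith

end ReducedTransfer

theorem stmt8_general {d n m p : ℕ}
    (β : ℝ) (hβ : 0 < β)
    (D : EuclideanSpace ℝ (Fin d) × ℝ → Matrix (Fin n) (Fin n) ℂ)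
    (B : EuclideanSpace ℝ (Fin d) → Matrix (Fin n) (Fin m) ℂ)
    (C : EuclideanSpace ℝ (Fin d) → Matrix (Fin p) (Fin n) ℂ)
    (μs : EuclideanSpace ℝ (Fin d)) (ωs : ℝ)
    (UD : Set (EuclideanSpace ℝ (Fin d) × ℝ)) (hUD : UD ∈ nhds (μs, ωs))
    (hD : ContDiffOn ℝ 1 D UD)
    (UB : Set (EuclideanSpace ℝ (Fin d))) (hUB : UB ∈ nhds μs)
    (hB : ContDiffOn ℝ 1 B UB)
    (UC : Set (EuclideanSpace ℝ (Fin d))) (hUC : UC ∈ nhds μs)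
    (hC : ContDiffOn ℝ 1 C UC) :
    ∃ ημ > (0 : ℝ), ∃ ηω > (0 : ℝ), ∃ γ > (0 : ℝ),
      ∀ (k : ℕ) (V W : Matrix (Fin n) (Fin k) ℂ),
        Vᴴ * V = (1 : Matrix (Fin k) (Fin k) ℂ) →
        Wᴴ * W = (1 : Matrix (Fin k) (Fin k) ℂ) →
        (∀ x : EuclideanSpace ℂ (Fin k), ‖x‖ = 1 →
          β ≤ ‖Matrix.toEuclideanLin (Wᴴ * D (μs, ωs) * V) x‖) →
        (∀ μ ∈ closedBall μs ημ, ∀ ω ∈ Set.Icc (ωs - ηω) (ωs + ηω),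
          IsUnit (Wᴴ * D (μ, ω) * V)) ∧
        (∀ μ' ∈ closedBall μs ημ, ∀ μ ∈ closedBall μs ημ,
          ∀ ω ∈ Set.Icc (ωs - ηω) (ωs + ηω),
            ‖(C μ' * V) * (Wᴴ * D (μ', ω) * V)⁻¹ * (Wᴴ * B μ') -
                (C μ * V) * (Wᴴ * D (μ, ω) * V)⁻¹ * (Wᴴ * B μ)‖ ≤ γ * ‖μ' - μ‖) ∧
        (∀ μ ∈ closedBall μs ημ, ∀ ω' ∈ Set.Icc (ωs - ηω) (ωs + ηω),
          ∀ ω ∈ Set.Icc (ωs - ηω) (ωs + ηω),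
            ‖(C μ * V) * (Wᴴ * D (μ, ω') * V)⁻¹ * (Wᴴ * B μ) -
                (C μ * V) * (Wᴴ * D (μ, ω) * V)⁻¹ * (Wᴴ * B μ)‖ ≤ γ * |ω' - ω|) := by
  obtain ⟨KD, tD, htD, hLD⟩ := (hD.contDiffAt hUD).exists_lipschitzOnWith
  obtain ⟨KB, tB, htB, hLB⟩ :=
    ((hB.contDiffAt hUB).comp (μs, ωs) contDiffAt_fst).exists_lipschitzOnWith
  obtain ⟨KC, tC, htC, hLC⟩ :=
    ((hC.contDiffAt hUC).comp (μs, ωs) contDiffAt_fst).exists_lipschitzOnWith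
  have hsmall : ∀ᶠ r in 𝓝 (0 : ℝ), KD * r < β / 2 :=
    (continuousAt_const.mul continuousAt_id).eventually_lt continuousAt_const (by simpa using hβ)
  obtain ⟨η, hη, ⟨⟨hCη, hDη⟩, hBη⟩, hKη⟩ := ((((hLC.eventually_closedBall htC).and
    (hLD.eventually_closedBall htD)).and (hLB.eventually_closedBall htB)).and hsmall).exists_gt
  obtain ⟨γ, hγ, hunif⟩ :=
    exists_uniform_lipschitz_reducedTransfer hη.le hβ hCη hDη hBη hKη.le
  have hmem : ∀ μ ∈ closedBall μs η, ∀ ω ∈ Set.Icc (ωs - η) (ωs + η),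
      (μ, ω) ∈ closedBall (μs, ωs) η := fun μ hμ ω hω => by
    rw [← closedBall_prod_same]
    exact ⟨hμ, Real.closedBall_eq_Icc ▸ hω⟩
  refine ⟨η, hη, η, hη, γ, hγ, fun k V W hV hW hβVW => ?_⟩
  obtain ⟨hunit, hlip⟩ := hunif k V W hV hW
    ((toEuclideanLin (Wᴴ * D (μs, ωs) * V)).mul_norm_le_norm_apply_of_norm_eq_one hβVW)
  refine ⟨fun μ hμ ω hω => hunit _ (hmem μ hμ ω hω), fun μ' hμ' μ hμ ω hω => ?_,
    fun μ hμ ω' hω' ω hω => ?_⟩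
  · simpa [reducedTransfer, Prod.dist_eq, dist_eq_norm] using
      hlip _ (hmem μ' hμ' ω hω) _ (hmem μ hμ ω hω)
  · simpa [reducedTransfer, Prod.dist_eq, Real.dist_eq] using
      hlip _ (hmem μ hμ ω' hω') _ (hmem μ hμ ω hω)

/-- **Uniform Lipschitz continuity of the reduced transfer functions (Lemma 3.2 (i)–(ii)).**
Let `D(μ, ω)`, `B(μ)`, `C(μ)` be continuously differentiable near `(μ*, ω*)`. Then there
are radii `η_μ, η_ω > 0` and a Lipschitz constant `γ > 0`, independent of the reduction
dimension `k` and of the matrices `V, W` with orthonormal columns for which the smallest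
singular value of `Wᴴ D(μ*, ω*) V` is at least `β`, such that the compressed pencil
`Wᴴ D(μ, ω) V` is invertible on the corresponding neighborhood and the reduced transfer
function `H^{V,W}(μ, ω) = (C(μ) V)(Wᴴ D(μ, ω) V)⁻¹(Wᴴ B(μ))` is `γ`-Lipschitz there in
`μ` and in `ω` separately (spectral norms throughout). -/
theorem stmt8 {d n m p : ℕ} (hd : 0 < d) (hn : 0 < n) (hm : 0 < m) (hp : 0 < p)
    (β : ℝ) (hβ : 0 < β)
    (D : EuclideanSpace ℝ (Fin d) × ℝ → Matrix (Fin n) (Fin n) ℂ)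
    (B : EuclideanSpace ℝ (Fin d) → Matrix (Fin n) (Fin m) ℂ)
    (C : EuclideanSpace ℝ (Fin d) → Matrix (Fin p) (Fin n) ℂ)
    (μs : EuclideanSpace ℝ (Fin d)) (ωs : ℝ)
    (UD : Set (EuclideanSpace ℝ (Fin d) × ℝ)) (hUD : UD ∈ nhds (μs, ωs))
    (hD : ContDiffOn ℝ 1 D UD)
    (UB : Set (EuclideanSpace ℝ (Fin d))) (hUB : UB ∈ nhds μs)
    (hB : ContDiffOn ℝ 1 B UB)
    (UC : Set (EuclideanSpace ℝ (Fin d))) (hUC : UC ∈ nhds μs)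
    (hC : ContDiffOn ℝ 1 C UC) :
    ∃ ημ > (0 : ℝ), ∃ ηω > (0 : ℝ), ∃ γ > (0 : ℝ),
      ∀ (k : ℕ) (V W : Matrix (Fin n) (Fin k) ℂ),
        Vᴴ * V = (1 : Matrix (Fin k) (Fin k) ℂ) →
        Wᴴ * W = (1 : Matrix (Fin k) (Fin k) ℂ) →
        (∀ x : EuclideanSpace ℂ (Fin k), ‖x‖ = 1 →
          β ≤ ‖Matrix.toEuclideanLin (Wᴴ * D (μs, ωs) * V) x‖) →
        (∀ μ ∈ closedBall μs ημ, ∀ ω ∈ Set.Icc (ωs - ηω) (ωs + ηω),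
          IsUnit (Wᴴ * D (μ, ω) * V)) ∧
        (∀ μ' ∈ closedBall μs ημ, ∀ μ ∈ closedBall μs ημ,
          ∀ ω ∈ Set.Icc (ωs - ηω) (ωs + ηω),
            ‖(C μ' * V) * (Wᴴ * D (μ', ω) * V)⁻¹ * (Wᴴ * B μ') -
                (C μ * V) * (Wᴴ * D (μ, ω) * V)⁻¹ * (Wᴴ * B μ)‖ ≤ γ * ‖μ' - μ‖) ∧
        (∀ μ ∈ closedBall μs ημ, ∀ ω' ∈ Set.Icc (ωs - ηω) (ωs + ηω),
          ∀ ω ∈ Set.Icc (ωs - ηω) (ωs + ηω),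
            ‖(C μ * V) * (Wᴴ * D (μ, ω') * V)⁻¹ * (Wᴴ * B μ) -
                (C μ * V) * (Wᴴ * D (μ, ω) * V)⁻¹ * (Wᴴ * B μ)‖ ≤ γ * |ω' - ω|) :=
  stmt8_general β hβ D B C μs ωs UD hUD hD UB hUB hB UC hUC hC
end

section
/- Let γ ≥ 0 and let ℓ, m : ℝ → ℝ be three times continuously differentiable on an open interval containing [0, 1], with |ℓ‴(t)| ≤ γ and |m‴(t)| ≤ γ for all t ∈ [0, 1]. If ℓ(0) = m(0), ℓ′(0) = m′(0) and ℓ(1) = m(1), then |ℓ″(0) − m″(0)| ≤ (2/3) γ. -/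
/-!
Expand `ℓ` and `m` to second order at `0` with Lagrange remainder and evaluate at `1`: the
interpolation conditions cancel everything except `(ℓ″(0) - m″(0)) / 2`, which is therefore at
most the sum of the two remainders, each bounded by `γ / 6`.
-/

open Set Nat

theorem taylorWithinEval_eq_sum_iteratedDeriv {f : ℝ → ℝ} {s : Set ℝ} {x₀ x : ℝ} {n : ℕ}
    (hs : UniqueDiffOn ℝ s) (hx₀ : x₀ ∈ s) (hf : ContDiffAt ℝ n f x₀) :
    taylorWithinEval f n s x₀ x =
      ∑ k ∈ Finset.range (n + 1), (k ! : ℝ)⁻¹ * (x - x₀) ^ k * iteratedDeriv k f x₀ := by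
  rw [taylor_within_apply]
  refine Finset.sum_congr rfl fun k hk => ?_
  rw [smul_eq_mul, iteratedDerivWithin_eq_iteratedDeriv hs (hf.of_le ?_) hx₀]
  exact_mod_cast Nat.lt_succ_iff.mp (Finset.mem_range.mp hk)

theorem abs_sub_taylor_two_le {f : ℝ → ℝ} {s : Set ℝ} {x₀ x γ : ℝ} (hs : IsOpen s)
    (hsub : uIcc x₀ x ⊆ s) (hf : ContDiffOn ℝ 3 f s)
    (hf3 : ∀ t ∈ uIcc x₀ x, |iteratedDeriv 3 f t| ≤ γ) :
    |f x - (f x₀ + deriv f x₀ * (x - x₀) + iteratedDeriv 2 f x₀ / 2 * (x - x₀) ^ 2)|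
      ≤ γ * |x - x₀| ^ 3 / 6 := by
  rcases eq_or_ne x₀ x with rfl | hx
  · simp
  obtain ⟨ξ, hξ, hT⟩ := taylor_mean_remainder_lagrange_iteratedDeriv (n := 2) hx (hf.mono hsub)
  have hx₀ : x₀ ∈ uIcc x₀ x := left_mem_uIcc
  rw [taylorWithinEval_eq_sum_iteratedDeriv (n := 2) (uniqueDiffOn_uIcc hx) hx₀
    ((hf.contDiffAt (hs.mem_nhds (hsub hx₀))).of_le (by norm_num))] at hT
  have hrem : f x - (f x₀ + deriv f x₀ * (x - x₀) + iteratedDeriv 2 f x₀ / 2 * (x - x₀) ^ 2)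
      = iteratedDeriv 3 f ξ * (x - x₀) ^ 3 / 6 := by
    simp only [Finset.sum_range_succ, Finset.sum_range_zero, iteratedDeriv_zero,
      iteratedDeriv_one] at hT
    norm_num [Nat.factorial] at hT
    linarith
  rw [hrem, abs_div, abs_mul, abs_pow, abs_of_pos (by norm_num : (0 : ℝ) < 6)]
  gcongr
  exact hf3 ξ (uIoo_subset_uIcc_self hξ)

theorem stmt10_general (γ : ℝ) (ℓ m : ℝ → ℝ) (s : Set ℝ) (hs : IsOpen s)
    (hsub : Set.Icc (0 : ℝ) 1 ⊆ s)
    (hℓ : ContDiffOn ℝ 3 ℓ s) (hm : ContDiffOn ℝ 3 m s)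
    (hℓ3 : ∀ t ∈ Set.Icc (0 : ℝ) 1, |iteratedDeriv 3 ℓ t| ≤ γ)
    (hm3 : ∀ t ∈ Set.Icc (0 : ℝ) 1, |iteratedDeriv 3 m t| ≤ γ)
    (h0 : ℓ 0 = m 0) (h0' : deriv ℓ 0 = deriv m 0) (h1 : ℓ 1 = m 1) :
    |iteratedDeriv 2 ℓ 0 - iteratedDeriv 2 m 0| ≤ (2 / 3) * γ := by
  rw [← uIcc_of_le zero_le_one] at hsub hℓ3 hm3
  have hℓT := abs_le.mp (abs_sub_taylor_two_le hs hsub hℓ hℓ3)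
  have hmT := abs_le.mp (abs_sub_taylor_two_le hs hsub hm hm3)
  norm_num [h0, h0', h1] at hℓT hmT
  rw [abs_le]
  constructor <;> linarith [hℓT.1, hℓT.2, hmT.1, hmT.2]

/-- **Taylor comparison of two thrice differentiable functions (core of Lemma 3.6 (i)).**
If `ℓ, m` are three times continuously differentiable on an open interval containing
`[0,1]`, with third derivatives bounded by `γ` on `[0,1]`, and they interpolate in value
at `0` and `1` and in first derivative at `0`, then their second derivatives at `0`
differ by at most `(2/3)γ`. -/
theorem stmt10 (γ : ℝ) (hγ : 0 ≤ γ) (ℓ m : ℝ → ℝ) (s : Set ℝ) (hs : IsOpen s)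
    (hsub : Set.Icc (0 : ℝ) 1 ⊆ s)
    (hℓ : ContDiffOn ℝ 3 ℓ s) (hm : ContDiffOn ℝ 3 m s)
    (hℓ3 : ∀ t ∈ Set.Icc (0 : ℝ) 1, |iteratedDeriv 3 ℓ t| ≤ γ)
    (hm3 : ∀ t ∈ Set.Icc (0 : ℝ) 1, |iteratedDeriv 3 m t| ≤ γ)
    (h0 : ℓ 0 = m 0) (h0' : deriv ℓ 0 = deriv m 0) (h1 : ℓ 1 = m 1) :
    |iteratedDeriv 2 ℓ 0 - iteratedDeriv 2 m 0| ≤ (2 / 3) * γ :=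
  stmt10_general γ ℓ m s hs hsub hℓ hm hℓ3 hm3 h0 h0' h1
end

section
/- Let d be a positive integer and K, L, Γ, ζ > 0. There exist constants C > 0 and r > 0, depending only on d, K, L, Γ, ζ, with the following property. Suppose f, g : ℝ^d → ℝ are twice continuously differentiable on the open ball B(μ*, 3r) around a point μ* ∈ ℝ^d and satisfy on this ball: ‖∇²f(x)‖ ≤ Γ, ‖∇²g(x)‖ ≤ Γ, and both ∇²f and ∇²g are L-Lipschitz in the operator norm. Suppose further that μ⁻, μ, μ⁺ are points of the closed ball B̄(μ*, r) such that: ∇f(μ*) = 0; ∇g(μ) = ∇f(μ); ∇g(μ⁺) = 0; ∇²f(μ) and ∇²g(μ) are invertible with ‖(∇²f(μ))⁻¹‖ ≤ K and ‖(∇²g(μ))⁻¹‖ ≤ K; and ‖∇²f(μ) − ∇²g(μ)‖ ≤ ζ ‖μ − μ⁻‖. Then ‖μ⁺ − μ*‖ ≤ C ‖μ − μ*‖ · max{‖μ − μ*‖, ‖μ⁻ − μ*‖}. -/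
/-!
Subtracting the first-order Taylor expansions of `∇g` and `∇f` at `μ`, evaluated at `μ⁺` and
`μ*`, and using `∇g(μ) = ∇f(μ)`, `∇g(μ⁺) = ∇f(μ*) = 0`, gives
`∇²g(μ)(μ⁺ - μ*) = (∇²f(μ) - ∇²g(μ))(μ* - μ) + O(‖μ - μ*‖² + ‖μ⁺ - μ‖²)`,
the remainders being quadratic because the Hessians are Lipschitz. Inverting `∇²g(μ)` and using
`‖∇²f(μ) - ∇²g(μ)‖ ≤ ζ‖μ - μ⁻‖` bounds `‖μ⁺ - μ*‖` by `C ‖μ - μ*‖ max(‖μ - μ*‖, ‖μ⁻ - μ*‖)`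
plus a term quadratic in `‖μ⁺ - μ*‖`, which is absorbed once `r = 1 / (4KL)`.
-/

open Metric

theorem ContDiffAt.differentiableAt_gradient {F : Type*} [NormedAddCommGroup F]
    [InnerProductSpace ℝ F] [CompleteSpace F] {f : F → ℝ} {x : F} (hf : ContDiffAt ℝ 2 f x) :
    DifferentiableAt ℝ (gradient f) x :=
  (InnerProductSpace.toDual ℝ F).symm.differentiableAt.comp x
    ((hf.fderiv_right (m := 1) le_rfl).differentiableAt one_ne_zero)

theorem Convex.norm_image_sub_sub_fderiv_le_of_lipschitz_fderiv {E : Type*}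
    [NormedAddCommGroup E] [NormedSpace ℝ E] {F : E → E} {s : Set E}
    (hs : Convex ℝ s) {L : ℝ} (hL : 0 ≤ L) (hF : ∀ z ∈ s, DifferentiableAt ℝ F z)
    (hF' : ∀ z ∈ s, ∀ w ∈ s, ‖fderiv ℝ F z - fderiv ℝ F w‖ ≤ L * ‖z - w‖)
    {x y : E} (hx : x ∈ s) (hy : y ∈ s) :
    ‖F y - F x - fderiv ℝ F x (y - x)‖ ≤ L * ‖y - x‖ ^ 2 := by
  have hseg : segment ℝ x y ⊆ s := hs.segment_subset hx hy
  have bound : ∀ z ∈ segment ℝ x y, ‖fderiv ℝ F z - fderiv ℝ F x‖ ≤ L * ‖y - x‖ := fun z hz =>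
    (hF' z (hseg hz) x hx).trans (by gcongr; exact norm_sub_le_of_mem_segment hz)
  calc ‖F y - F x - fderiv ℝ F x (y - x)‖ ≤ L * ‖y - x‖ * ‖y - x‖ :=
        (convex_segment x y).norm_image_sub_le_of_norm_fderiv_le' (fun z hz => hF z (hseg hz))
          bound (left_mem_segment ℝ x y) (right_mem_segment ℝ x y)
    _ = L * ‖y - x‖ ^ 2 := by ring

theorem norm_gradient_sub_sub_hessian_le {F : Type*} [NormedAddCommGroup F]
    [InnerProductSpace ℝ F] [CompleteSpace F] {f : F → ℝ} {s t : Set F} (hs : IsOpen s)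
    (hf : ContDiffOn ℝ 2 f s) {L : ℝ} (hL : 0 ≤ L)
    (hf'' : ∀ z ∈ s, ∀ w ∈ s, ‖fderiv ℝ (gradient f) z - fderiv ℝ (gradient f) w‖ ≤ L * ‖z - w‖)
    (ht : Convex ℝ t) (hts : t ⊆ s) {x y : F} (hx : x ∈ t) (hy : y ∈ t) :
    ‖gradient f y - gradient f x - fderiv ℝ (gradient f) x (y - x)‖ ≤ L * ‖y - x‖ ^ 2 :=
  ht.norm_image_sub_sub_fderiv_le_of_lipschitz_fderiv hL
    (fun _ hz => (hf.contDiffAt (hs.mem_nhds (hts hz))).differentiableAt_gradient)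
    (fun z hz w hw => hf'' z (hts hz) w (hts hw)) hx hy

theorem norm_sub_le_of_perturbed_newton_step {𝕜 E : Type*} [NontriviallyNormedField 𝕜]
    [NormedAddCommGroup E] [NormedSpace 𝕜 E] (F G : E → E) (A : E →L[𝕜] E) (B : E ≃L[𝕜] E)
    {x₀ x x₁ : E} (hF : F x₀ = 0) (hG : G x₁ = 0) (hGF : G x = F x) :
    ‖x₁ - x₀‖ ≤ ‖(B.symm : E →L[𝕜] E)‖ * (‖A - B‖ * ‖x₀ - x‖
      + ‖F x₀ - F x - A (x₀ - x)‖ + ‖G x₁ - G x - B (x₁ - x)‖) := by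
  have key : x₁ - x₀ = B.symm ((A - B) (x₀ - x) + (F x₀ - F x - A (x₀ - x))
      - (G x₁ - G x - B (x₁ - x))) := by
    rw [ContinuousLinearEquiv.eq_symm_apply]
    simp only [sub_apply, hF, hG, hGF, ContinuousLinearEquiv.coe_coe, map_sub]
    abel
  rw [key]
  refine ((B.symm : E →L[𝕜] E).le_opNorm _).trans ?_
  gcongr
  calc _ ≤ ‖(A - B) (x₀ - x) + (F x₀ - F x - A (x₀ - x))‖ + ‖G x₁ - G x - B (x₁ - x)‖ :=
        norm_sub_le _ _
    _ ≤ _ := by gcongr; exact (norm_add_le _ _).trans (by gcongr; exact (A - B).le_opNorm _)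

theorem le_mul_max_of_le_quadratic {K L ζ r a b x : ℝ} (hK : 0 ≤ K) (hL : 0 ≤ L)
    (hζ : 0 ≤ ζ) (ha : 0 ≤ a) (hx : 0 ≤ x) (hxr : x ≤ r) (hr : 4 * K * L * r ≤ 1)
    (h : x ≤ K * (ζ * (a + b) * a + L * a ^ 2 + L * (x + a) ^ 2)) :
    x ≤ (4 * K * ζ + 6 * K * L) * a * max a b := by
  have ham : a ≤ max a b := le_max_left a b
  have hbm : b ≤ max a b := le_max_right a b
  have hKL : 0 ≤ K * L := mul_nonneg hK hL
  -- `x ≤ r ≤ 1 / (4KL)` makes the term quadratic in `x` at most `x / 2`, so it is absorbed.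
  have hx2 : 2 * (K * L) * x ^ 2 ≤ x / 2 := by nlinarith [mul_nonneg hKL hx]
  nlinarith [mul_nonneg (mul_nonneg hK hζ) ha, mul_nonneg hKL ha,
    mul_nonneg hKL (sq_nonneg (x - a))]

theorem stmt17_general (d : ℕ) (K L Γ ζ : ℝ)
    (hK : 0 < K) (hL : 0 < L) (hζ : 0 < ζ) :
    ∃ C > (0 : ℝ), ∃ r > (0 : ℝ),
      ∀ (f g : EuclideanSpace ℝ (Fin d) → ℝ)
        (μs μm μ μp : EuclideanSpace ℝ (Fin d)),
        ContDiffOn ℝ 2 f (ball μs (3 * r)) →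
        ContDiffOn ℝ 2 g (ball μs (3 * r)) →
        (∀ x ∈ ball μs (3 * r), ‖fderiv ℝ (gradient f) x‖ ≤ Γ) →
        (∀ x ∈ ball μs (3 * r), ‖fderiv ℝ (gradient g) x‖ ≤ Γ) →
        (∀ x ∈ ball μs (3 * r), ∀ y ∈ ball μs (3 * r),
          ‖fderiv ℝ (gradient f) x - fderiv ℝ (gradient f) y‖ ≤ L * ‖x - y‖) →
        (∀ x ∈ ball μs (3 * r), ∀ y ∈ ball μs (3 * r),
          ‖fderiv ℝ (gradient g) x - fderiv ℝ (gradient g) y‖ ≤ L * ‖x - y‖) →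
        μm ∈ closedBall μs r → μ ∈ closedBall μs r → μp ∈ closedBall μs r →
        gradient f μs = 0 →
        gradient g μ = gradient f μ →
        gradient g μp = 0 →
        ∀ (Af Ag : EuclideanSpace ℝ (Fin d) ≃L[ℝ] EuclideanSpace ℝ (Fin d)),
          (Af : EuclideanSpace ℝ (Fin d) →L[ℝ] EuclideanSpace ℝ (Fin d)) =
            fderiv ℝ (gradient f) μ →
          (Ag : EuclideanSpace ℝ (Fin d) →L[ℝ] EuclideanSpace ℝ (Fin d)) =
            fderiv ℝ (gradient g) μ →
          ‖(Af.symm : EuclideanSpace ℝ (Fin d) →L[ℝ] EuclideanSpace ℝ (Fin d))‖ ≤ K →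
          ‖(Ag.symm : EuclideanSpace ℝ (Fin d) →L[ℝ] EuclideanSpace ℝ (Fin d))‖ ≤ K →
          ‖fderiv ℝ (gradient f) μ - fderiv ℝ (gradient g) μ‖ ≤ ζ * ‖μ - μm‖ →
          ‖μp - μs‖ ≤ C * ‖μ - μs‖ * max ‖μ - μs‖ ‖μm - μs‖ := by
  set r : ℝ := (4 * K * L)⁻¹
  have hr : 0 < r := by positivity
  refine ⟨4 * K * ζ + 6 * K * L, by positivity, r, hr, ?_⟩
  intro f g μs μm μ μp hf hg _ _ hf'' hg'' _ hμ hμp hfμs hgμ hgμp _ Ag _ hAg _ hAg' hfg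
  have hball : closedBall μs r ⊆ ball μs (3 * r) := closedBall_subset_ball (by linarith)
  have taylor_f := norm_gradient_sub_sub_hessian_le isOpen_ball hf hL.le hf''
    (convex_closedBall μs r) hball hμ (mem_closedBall_self hr.le)
  have taylor_g := norm_gradient_sub_sub_hessian_le isOpen_ball hg hL.le hg''
    (convex_closedBall μs r) hball hμ hμp
  have newton := norm_sub_le_of_perturbed_newton_step (gradient f) (gradient g)
    (fderiv ℝ (gradient f) μ) Ag hfμs hgμp hgμ
  rw [hAg] at newton
  rw [← hAg, ContinuousLinearEquiv.coe_coe] at taylor_g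
  have hμμm : ‖μ - μm‖ ≤ ‖μ - μs‖ + ‖μm - μs‖ := by
    simpa only [norm_sub_rev μs μm] using norm_sub_le_norm_sub_add_norm_sub μ μs μm
  have hμpμ : ‖μp - μ‖ ≤ ‖μp - μs‖ + ‖μ - μs‖ := by
    simpa only [norm_sub_rev μs μ] using norm_sub_le_norm_sub_add_norm_sub μp μs μ
  rw [norm_sub_rev μs μ] at newton taylor_f
  apply le_mul_max_of_le_quadratic (r := r) hK.le hL.le hζ.le (norm_nonneg _) (norm_nonneg _)
    (by rwa [← dist_eq_norm, ← mem_closedBall]) (mul_inv_cancel₀ (by positivity)).le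
  calc ‖μp - μs‖ ≤ _ := newton
    _ ≤ K * (ζ * (‖μ - μs‖ + ‖μm - μs‖) * ‖μ - μs‖
        + L * ‖μ - μs‖ ^ 2 + L * (‖μp - μs‖ + ‖μ - μs‖) ^ 2) := by
      gcongr
      · exact hfg.trans (by gcongr)
      · exact taylor_g.trans (by gcongr)

/-- **Quantitative core of the local superlinear convergence theorem (Theorem 3.7).**
Given `d, K, L, Γ, ζ`, there are `C > 0` and `r > 0` such that: whenever `f, g` are `C²`
on `B(μ*, 3r)` with Hessians (`fderiv` of `gradient`) bounded by `Γ` and `L`-Lipschitz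
there, `μ⁻, μ, μ⁺ ∈ B̄(μ*, r)` with `∇f(μ*) = 0`, `∇g(μ) = ∇f(μ)`, `∇g(μ⁺) = 0`, both
Hessians at `μ` invertible with inverses bounded by `K`, and
`‖∇²f(μ) − ∇²g(μ)‖ ≤ ζ‖μ − μ⁻‖`, one has
`‖μ⁺ − μ*‖ ≤ C ‖μ − μ*‖ · max(‖μ − μ*‖, ‖μ⁻ − μ*‖)`. -/
theorem stmt17 (d : ℕ) (hd : 0 < d) (K L Γ ζ : ℝ)
    (hK : 0 < K) (hL : 0 < L) (hΓ : 0 < Γ) (hζ : 0 < ζ) :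
    ∃ C > (0 : ℝ), ∃ r > (0 : ℝ),
      ∀ (f g : EuclideanSpace ℝ (Fin d) → ℝ)
        (μs μm μ μp : EuclideanSpace ℝ (Fin d)),
        ContDiffOn ℝ 2 f (ball μs (3 * r)) →
        ContDiffOn ℝ 2 g (ball μs (3 * r)) →
        (∀ x ∈ ball μs (3 * r), ‖fderiv ℝ (gradient f) x‖ ≤ Γ) →
        (∀ x ∈ ball μs (3 * r), ‖fderiv ℝ (gradient g) x‖ ≤ Γ) →
        (∀ x ∈ ball μs (3 * r), ∀ y ∈ ball μs (3 * r),
          ‖fderiv ℝ (gradient f) x - fderiv ℝ (gradient f) y‖ ≤ L * ‖x - y‖) →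
        (∀ x ∈ ball μs (3 * r), ∀ y ∈ ball μs (3 * r),
          ‖fderiv ℝ (gradient g) x - fderiv ℝ (gradient g) y‖ ≤ L * ‖x - y‖) →
        μm ∈ closedBall μs r → μ ∈ closedBall μs r → μp ∈ closedBall μs r →
        gradient f μs = 0 →
        gradient g μ = gradient f μ →
        gradient g μp = 0 →
        ∀ (Af Ag : EuclideanSpace ℝ (Fin d) ≃L[ℝ] EuclideanSpace ℝ (Fin d)),
          (Af : EuclideanSpace ℝ (Fin d) →L[ℝ] EuclideanSpace ℝ (Fin d)) =
            fderiv ℝ (gradient f) μ →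
          (Ag : EuclideanSpace ℝ (Fin d) →L[ℝ] EuclideanSpace ℝ (Fin d)) =
            fderiv ℝ (gradient g) μ →
          ‖(Af.symm : EuclideanSpace ℝ (Fin d) →L[ℝ] EuclideanSpace ℝ (Fin d))‖ ≤ K →
          ‖(Ag.symm : EuclideanSpace ℝ (Fin d) →L[ℝ] EuclideanSpace ℝ (Fin d))‖ ≤ K →
          ‖fderiv ℝ (gradient f) μ - fderiv ℝ (gradient g) μ‖ ≤ ζ * ‖μ - μm‖ →
          ‖μp - μs‖ ≤ C * ‖μ - μs‖ * max ‖μ - μs‖ ‖μm - μs‖ :=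
  stmt17_general d K L Γ ζ hK hL hζ
end
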